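/- arXiv:1301.5723 — 4 statements merged into one kernel-verified Lean document; each statement's English description precedes it below -/
import Mathlib

section
/- Let α be a reduced word of ω with tower decomposition a_1 … a_s. If for some index i the conditions in(a_i) ≤ in(a_{i+1}) and fin(a_{i+1}) < fin(a_i) hold, where in and fin denote the first and last letters of a tower word, then for any factorization a_{i+1} = b_1 b_2 into tower words (b_2 possibly empty), the word β = a_1 … a_{i−1} b̃_1 a_i b_2 a_{i+2} … a_s, where b̃_1 is obtained from b_1 by increasing every letter by 1, represents the same permutation ω as α. -/
/-- The adjacent transposition `sᵢ = (i, i+1)` as a permutation of `ℕ`. -/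
def sGen (i : ℕ) : Equiv.Perm ℕ := Equiv.swap i (i + 1)

/-- The permutation represented by a word. -/
def toPerm (w : List ℕ) : Equiv.Perm ℕ := (w.map sGen).prod

/-- A word is reduced (of minimal length among words representing the same permutation). -/
def IsReducedWord (w : List ℕ) : Prop := ∀ v : List ℕ, toPerm v = toPerm w → w.length ≤ v.length

/-- `w` is a reduced word for the permutation `ω`. -/
def IsReducedWordOf (w : List ℕ) (ω : Equiv.Perm ℕ) : Prop :=
  toPerm w = ω ∧ ∀ v : List ℕ, toPerm v = ω → w.length ≤ v.length

/-- The relation `<₁`: `β` is obtained from `α` by swapping two adjacent letters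
`x, y` with `y ≥ x + 2` (the smaller letter moves right). -/
def Rel1 (α β : List ℕ) : Prop :=
  ∃ (p q : List ℕ) (x y : ℕ), x + 2 ≤ y ∧
    α = p ++ x :: y :: q ∧ β = p ++ y :: x :: q

/-- Lexicographic order (non-strict) on words. -/
def LexLe (α β : List ℕ) : Prop := α = β ∨ List.Lex (· < ·) α β

/-- A tower word: a nonempty increasing run of consecutive integers. -/
def IsTowerWord (a : List ℕ) : Prop := a ≠ [] ∧ a.Chain' (fun x y => y = x + 1)

/-- First letter of a tower word. -/
def inn (a : List ℕ) : ℕ := a.headI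

/-- Last letter of a tower word. -/
def fin' (a : List ℕ) : ℕ := a.getLastD 0

/-- `L` is the tower decomposition of `w`: a factorization into maximal tower words. -/
def IsTowerDecomp (w : List ℕ) (L : List (List ℕ)) : Prop :=
  L.flatten = w ∧ (∀ a ∈ L, IsTowerWord a) ∧
    L.Chain' (fun a b => inn b ≠ fin' a + 1)

/-- The relation `<₂`: a directed long-braid move of a tower word past its left neighbour. -/
def Rel2 (α β : List ℕ) : Prop :=
  ∃ (A B : List (List ℕ)) (a b b1 b2 : List ℕ),
    IsTowerDecomp α (A ++ a :: b :: B) ∧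
    inn a ≤ inn b ∧ inn b < fin' b ∧ fin' b < fin' a ∧
    IsTowerWord b1 ∧ (b2 = [] ∨ IsTowerWord b2) ∧ b1 ++ b2 = b ∧
    β = A.flatten ++ (b1.map (· + 1)) ++ a ++ b2 ++ B.flatten

/-- The directed-braid order: reflexive-transitive closure of `<₁ ∪ <₂`. -/
def DBraid : List ℕ → List ℕ → Prop :=
  Relation.ReflTransGen (fun α β => Rel1 α β ∨ Rel2 α β)

/-- The natural word of `ω`: the reduced word whose tower decomposition has
strictly decreasing initial letters. -/
def IsNaturalWordOf (η : List ℕ) (ω : Equiv.Perm ℕ) : Prop :=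
  IsReducedWordOf η ω ∧ ∃ L, IsTowerDecomp η L ∧ L.Chain' (fun a b => inn b < inn a)

/-- A natural basic word of `ω`: a reduced word whose tower decomposition satisfies
`fin(aᵢ) > in(aᵢ₊₁)` for all `i`. -/
def IsNaturalBasicOf (β : List ℕ) (ω : Equiv.Perm ℕ) : Prop :=
  IsReducedWordOf β ω ∧ ∃ L, IsTowerDecomp β L ∧ L.Chain' (fun a b => inn b < fin' a)

/-- One step of the track of a letter `b` through a tower word `a`. -/
def trackStep (a : List ℕ) (b : ℕ) : Option ℕ :=
  if inn a < b ∧ b ≤ fin' a then some (b - 1)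
  else if b + 2 ≤ inn a ∨ fin' a + 2 ≤ b then some b
  else none

/-- The track sequence of `b` through a list of tower words. -/
def trackSeq : ℕ → List (List ℕ) → List ℕ
  | b, [] => [b]
  | b, a :: rest =>
    match trackStep a b with
    | none => [b]
    | some b' => b :: trackSeq b' rest

/-- The tower decomposition of a word, as a function. -/
def towerDecomp : List ℕ → List (List ℕ)
  | [] => []
  | x :: xs =>
    match towerDecomp xs with
    | [] => [[x]]
    | t :: ts => if t.headI = x + 1 then (x :: t) :: ts else [x] :: t :: ts

/-!
As a permutation, the tower word `s_p ⋯ s_{p+n-1}` sends `x ↦ x + 1` for `p ≤ x < p + n`, so it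
conjugates `s_c` to `s_{c+1}` whenever `p ≤ c` and `c + 2 ≤ p + n`; hence `b̃₁ a = a b₁` for every
word `b₁` with letters in `[in(a), fin(a))`. The hypotheses `in(a) ≤ in(b)` and `fin(b) < fin(a)`
put all letters of the prefix `b₁` of the tower word `b` in that range, so `β` and
`α = ⋯ a b₁ b₂ ⋯` represent the same permutation.
-/

lemma toPerm_append (u v : List ℕ) : toPerm (u ++ v) = toPerm u * toPerm v := by
  simp [toPerm]

lemma toPerm_cons (c : ℕ) (w : List ℕ) : toPerm (c :: w) = sGen c * toPerm w := by
  simp [toPerm]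

lemma toPerm_append_append_congr {u v : List ℕ} (h : toPerm u = toPerm v) (x y : List ℕ) :
    toPerm (x ++ u ++ y) = toPerm (x ++ v ++ y) := by
  simp only [toPerm_append, h]

lemma toPerm_range'_apply (p n x : ℕ) :
    toPerm (List.range' p n) x =
      if p ≤ x ∧ x < p + n then x + 1 else if x = p + n then p else x := by
  induction n generalizing p with
  | zero =>
    simp only [toPerm, List.range'_zero, List.map_nil, List.prod_nil, Equiv.Perm.coe_one, id_eq,
      add_zero]
    split_ifs <;> omega
  | succ n ih =>
    rw [List.range'_succ, ← List.singleton_append, toPerm_append, Equiv.Perm.mul_apply, ih]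
    simp only [toPerm, List.map_singleton, List.prod_singleton, sGen, Equiv.swap_apply_def]
    split_ifs <;> omega

lemma sGen_succ_mul_toPerm_range' {p n c : ℕ} (hp : p ≤ c) (hc : c + 2 ≤ p + n) :
    sGen (c + 1) * toPerm (List.range' p n) = toPerm (List.range' p n) * sGen c := by
  ext x
  simp only [Equiv.Perm.mul_apply, sGen, Equiv.swap_apply_def, toPerm_range'_apply]
  split_ifs <;> omega

lemma toPerm_map_succ_append_range' {p n : ℕ} {w : List ℕ}
    (hw : ∀ c ∈ w, p ≤ c ∧ c + 2 ≤ p + n) :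
    toPerm (w.map (· + 1) ++ List.range' p n) = toPerm (List.range' p n ++ w) := by
  induction w with
  | nil => simp
  | cons c w ih =>
    have hc := hw c List.mem_cons_self
    have ih := ih fun d hd => hw d (List.mem_cons_of_mem c hd)
    rw [List.map_cons, List.cons_append, toPerm_cons, ih, toPerm_append, toPerm_append,
      toPerm_cons, ← mul_assoc, sGen_succ_mul_toPerm_range' hc.1 hc.2, mul_assoc]

lemma IsTowerWord.eq_range' {a : List ℕ} (ha : IsTowerWord a) :
    a = List.range' (inn a) a.length := by
  obtain ⟨-, hchain⟩ := ha
  induction a with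
  | nil => rfl
  | cons x xs ih =>
    rcases xs with _ | ⟨y, ys⟩
    · rfl
    · obtain ⟨rfl, hchain⟩ := List.isChain_cons_cons.mp hchain
      rw [List.length_cons, List.range'_succ]
      exact congrArg (x :: ·) (ih hchain)

lemma IsTowerWord.fin'_eq {a : List ℕ} (ha : IsTowerWord a) :
    fin' a = inn a + a.length - 1 := by
  conv_lhs => rw [fin', ha.eq_range']
  rw [List.getLastD_eq_getLast?, List.getLast?_range', if_neg (List.length_pos_iff.mpr ha.1).ne']
  rfl

lemma IsTowerWord.mem_iff {a : List ℕ} (ha : IsTowerWord a) {c : ℕ} :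
    c ∈ a ↔ inn a ≤ c ∧ c ≤ fin' a := by
  have hpos := List.length_pos_iff.mpr ha.1
  conv_lhs => rw [ha.eq_range', List.mem_range'_1]
  rw [ha.fin'_eq]
  omega

lemma IsTowerWord.toPerm_map_succ_append {a w : List ℕ} (ha : IsTowerWord a)
    (hw : ∀ c ∈ w, inn a ≤ c ∧ c < fin' a) :
    toPerm (w.map (· + 1) ++ a) = toPerm (a ++ w) := by
  rw [ha.eq_range']
  refine toPerm_map_succ_append_range' fun c hc => ?_
  have hc := hw c hc
  have hfin := ha.fin'_eq
  omega

theorem rel2_move_preserves_perm_general (ω : Equiv.Perm ℕ) (α : List ℕ)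
    (hα : IsReducedWordOf α ω)
    (A B : List (List ℕ)) (a b b1 b2 : List ℕ)
    (hd : IsTowerDecomp α (A ++ a :: b :: B))
    (h1 : inn a ≤ inn b) (h2 : fin' b < fin' a)
    (hfac : b1 ++ b2 = b) :
    toPerm (A.flatten ++ (b1.map (· + 1)) ++ a ++ b2 ++ B.flatten) = ω := by
  obtain ⟨rfl, htower, -⟩ := hd
  have ha : IsTowerWord a := htower a (by simp)
  have hb : IsTowerWord b := htower b (by simp)
  have hb1 : ∀ c ∈ b1, inn a ≤ c ∧ c < fin' a := fun c hc => by
    have hcb := hb.mem_iff.mp (hfac ▸ List.mem_append_left b2 hc)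
    omega
  have hmove := toPerm_append_append_congr (ha.toPerm_map_succ_append hb1) A.flatten
    (b2 ++ B.flatten)
  rw [← hα.1, ← hfac]
  simpa only [List.append_assoc, List.flatten_append, List.flatten_cons] using hmove

/-- moving a (shifted) initial segment of a tower word past its left
neighbour preserves the represented permutation. -/
theorem rel2_move_preserves_perm (ω : Equiv.Perm ℕ) (α : List ℕ)
    (hα : IsReducedWordOf α ω)
    (A B : List (List ℕ)) (a b b1 b2 : List ℕ)
    (hd : IsTowerDecomp α (A ++ a :: b :: B))
    (h1 : inn a ≤ inn b) (h2 : fin' b < fin' a)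
    (hb1 : IsTowerWord b1) (hb2 : b2 = [] ∨ IsTowerWord b2)
    (hfac : b1 ++ b2 = b) :
    toPerm (A.flatten ++ (b1.map (· + 1)) ++ a ++ b2 ++ B.flatten) = ω :=
  rel2_move_preserves_perm_general ω α hα A B a b b1 b2 hd h1 h2 hfac
end

section
/- If α and β are reduced words of the same permutation ω with α <_2 β, then α ≤ β in the lexicographic order. -/
/-- the relation `<₂` implies the lexicographic order. -/
theorem rel2_le_lex (ω : Equiv.Perm ℕ) (α β : List ℕ)
    (hα : IsReducedWordOf α ω) (hβ : IsReducedWordOf β ω)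
    (h : Rel2 α β) : LexLe α β := by
  obtain ⟨A, B, a, b, b1, b2, hdec, hab, _, _, hb1, _, hsplit, hβ⟩ := h
  obtain ⟨hflat, htower, _⟩ := hdec
  -- α = A.flatten ++ a ++ b1 ++ b2 ++ B.flatten
  have ha : IsTowerWord a := htower a (by simp)
  have hb : IsTowerWord b := htower b (by simp)
  obtain ⟨x, ta, rfl⟩ := List.exists_cons_of_ne_nil ha.1
  obtain ⟨y, tb, rfl⟩ := List.exists_cons_of_ne_nil hb1.1
  have hαeq : α = A.flatten ++ (x :: ta) ++ (y :: tb) ++ b2 ++ B.flatten := by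
    rw [← hflat, ← hsplit]; simp
  have hib : b.headI = y := by rw [← hsplit]; rfl
  have hxy : x ≤ y := by simpa [inn, hib] using hab
  right
  rw [hαeq, hβ]
  have hlex : List.Lex (· < ·)
      ((x :: ta) ++ (y :: tb) ++ b2 ++ B.flatten)
      (((y :: tb).map (· + 1)) ++ (x :: ta) ++ b2 ++ B.flatten) := by
    simp only [List.map_cons, List.cons_append]
    exact List.Lex.rel (by omega)
  have append_lex : ∀ (p l1 l2 : List ℕ), List.Lex (· < ·) l1 l2 →
      List.Lex (· < ·) (p ++ l1) (p ++ l2) := by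
    intro p l1 l2 hl
    induction p with
    | nil => exact hl
    | cons h t ih => exact List.Lex.cons ih
  have := append_lex A.flatten _ _ hlex
  simpa [List.append_assoc] using this
end

section
/- Let α be a reduced word of ω with tower decomposition a_1 … a_k. If for some i, fin(a_i) < in(a_{i+1}), then in(a_{i+1}) − fin(a_i) ≥ 2, and the word obtained from α by swapping the letters fin(a_i) and in(a_{i+1}) is a reduced word of ω strictly greater than α in the directed-braid order; hence a maximal element of the directed-braid poset satisfies fin(a_i) > in(a_{i+1}) for all i. -/
lemma sGen_mul_comm_of_add_two_le {x y : ℕ} (h : x + 2 ≤ y) :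
    sGen x * sGen y = sGen y * sGen x := by
  ext n
  simp only [sGen, Equiv.Perm.mul_apply, Equiv.swap_apply_def]
  split_ifs <;> omega

lemma toPerm_append_cons_cons_comm (p q : List ℕ) {x y : ℕ} (h : x + 2 ≤ y) :
    toPerm (p ++ y :: x :: q) = toPerm (p ++ x :: y :: q) := by
  simp only [toPerm, List.map_append, List.prod_append, List.map_cons, List.prod_cons]
  rw [← mul_assoc (sGen y), ← mul_assoc (sGen x), sGen_mul_comm_of_add_two_le h]

lemma toPerm_append_cons_cons_self (p q : List ℕ) (x : ℕ) :
    toPerm (p ++ x :: x :: q) = toPerm (p ++ q) := by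
  simp only [toPerm, List.map_append, List.prod_append, List.map_cons, List.prod_cons]
  rw [← mul_assoc (sGen x), sGen, Equiv.swap_mul_self, one_mul]

lemma Rel1.ne {α β : List ℕ} (h : Rel1 α β) : β ≠ α := by
  obtain ⟨p, q, x, y, hxy, rfl, rfl⟩ := h
  intro heq
  simp only [List.append_cancel_left_eq, List.cons.injEq] at heq
  omega

namespace IsTowerWord

lemma eq_dropLast_append_fin' {a : List ℕ} (ha : IsTowerWord a) :
    a = a.dropLast ++ [fin' a] := by
  rw [fin', List.getLastD_eq_getLast?, List.getLast?_eq_some_getLast ha.1]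
  exact (List.dropLast_append_getLast ha.1).symm

lemma eq_inn_cons_tail {b : List ℕ} (hb : IsTowerWord b) : b = inn b :: b.tail := by
  cases b with
  | nil => exact absurd rfl hb.1
  | cons => rfl

end IsTowerWord

namespace IsTowerDecomp

variable {α : List ℕ} {A B : List (List ℕ)} {a b : List ℕ}

lemma eq_append_fin'_inn (h : IsTowerDecomp α (A ++ a :: b :: B)) :
    α = (A.flatten ++ a.dropLast) ++ fin' a :: inn b :: (b.tail ++ B.flatten) := by
  obtain ⟨hflat, htower, -⟩ := h
  rw [← hflat, List.flatten_append, List.flatten_cons, List.flatten_cons]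
  conv_lhs => rw [(htower a (by simp)).eq_dropLast_append_fin', (htower b (by simp)).eq_inn_cons_tail]
  simp

lemma inn_ne_fin'_add_one (h : IsTowerDecomp α (A ++ a :: b :: B)) : inn b ≠ fin' a + 1 := by
  have hchain : List.IsChain (fun a b => inn b ≠ fin' a + 1) (A ++ a :: b :: B) := h.2.2
  exact (List.isChain_cons_cons.mp (List.isChain_append.mp hchain).2.1).1

end IsTowerDecomp

namespace IsReducedWordOf

variable {ω : Equiv.Perm ℕ} {p q : List ℕ}

lemma ne_append_cons_cons_self {α : List ℕ} (hα : IsReducedWordOf α ω) (x : ℕ) :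
    α ≠ p ++ x :: x :: q := by
  rintro rfl
  have hle := hα.2 (p ++ q) (by rw [← toPerm_append_cons_cons_self, hα.1])
  simp at hle

lemma append_cons_cons_comm {x y : ℕ} (hα : IsReducedWordOf (p ++ x :: y :: q) ω)
    (h : x + 2 ≤ y) : IsReducedWordOf (p ++ y :: x :: q) ω :=
  ⟨by rw [toPerm_append_cons_cons_comm p q h, hα.1], fun v hv => by simpa using hα.2 v hv⟩

lemma boundary_swap {α : List ℕ} (hα : IsReducedWordOf α ω) {A B : List (List ℕ)}
    {a b : List ℕ} (hdec : IsTowerDecomp α (A ++ a :: b :: B)) (hlt : fin' a < inn b) :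
    fin' a + 2 ≤ inn b ∧
      Rel1 α (A.flatten ++ a.dropLast ++ inn b :: fin' a :: b.tail ++ B.flatten) ∧
      IsReducedWordOf (A.flatten ++ a.dropLast ++ inn b :: fin' a :: b.tail ++ B.flatten) ω := by
  have hgap : fin' a + 2 ≤ inn b := by have := hdec.inn_ne_fin'_add_one; omega
  have hswap : A.flatten ++ a.dropLast ++ inn b :: fin' a :: b.tail ++ B.flatten =
      (A.flatten ++ a.dropLast) ++ inn b :: fin' a :: (b.tail ++ B.flatten) := by simp
  rw [hswap]
  rw [hdec.eq_append_fin'_inn] at hα ⊢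
  exact ⟨hgap, ⟨_, _, _, _, hgap, rfl, rfl⟩, hα.append_cons_cons_comm hgap⟩

end IsReducedWordOf

/-- if `fin(aᵢ) < in(aᵢ₊₁)` at some tower-word boundary of a reduced word α,
then the gap is at least 2 and swapping these two letters gives a reduced word of ω
strictly greater than α in the directed-braid order; hence a maximal element of the
directed-braid poset satisfies `fin(aᵢ) > in(aᵢ₊₁)` at every boundary. -/
theorem boundary_swap_and_maximal (ω : Equiv.Perm ℕ) (α : List ℕ)
    (hα : IsReducedWordOf α ω) :
    (∀ (A B : List (List ℕ)) (a b : List ℕ),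
      IsTowerDecomp α (A ++ a :: b :: B) → fin' a < inn b →
        fin' a + 2 ≤ inn b ∧
        Rel1 α (A.flatten ++ a.dropLast ++ inn b :: fin' a :: b.tail ++ B.flatten) ∧
        IsReducedWordOf (A.flatten ++ a.dropLast ++ inn b :: fin' a :: b.tail ++ B.flatten) ω) ∧
    ((∀ γ : List ℕ, IsReducedWordOf γ ω → DBraid α γ → γ = α) →
      ∀ (A B : List (List ℕ)) (a b : List ℕ),
        IsTowerDecomp α (A ++ a :: b :: B) → inn b < fin' a) := by
  refine ⟨fun A B a b => hα.boundary_swap, fun hmax A B a b hdec => ?_⟩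
  have hne : inn b ≠ fin' a := fun heq =>
    hα.ne_append_cons_cons_self (fin' a) (heq ▸ hdec.eq_append_fin'_inn)
  by_contra! hle
  obtain ⟨-, hrel, hred⟩ := hα.boundary_swap hdec (lt_of_le_of_ne hle hne.symm)
  exact hrel.ne (hmax _ hred (.single (.inl hrel)))
end

section
/- If α β is a reduced word, then distinct restricted shuffles of α with β (as colored words with designated red/blue positions) give pairwise distinct underlying words; i.e., the map from restricted shuffles to words is injective. -/
/-- Merge two words according to a red/blue coloring: `false` takes the next
letter of the first (red) word, `true` the next letter of the second (blue) word. -/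
def merge : List Bool → List ℕ → List ℕ → List ℕ
  | [], _, _ => []
  | false :: c, as, bs => as.headI :: merge c as.tail bs
  | true :: c, as, bs => bs.headI :: merge c as bs.tail

/-- `c` is a valid restricted-shuffle plan of the red word with the blue word:
the coloring exhausts both words, and a blue letter may be placed before the
remaining red letters only if none of them equals `b - 1`, `b` or `b + 1`. -/
def ValidRS : List Bool → List ℕ → List ℕ → Prop
  | [], as, bs => as = [] ∧ bs = []
  | false :: c, as, bs => as ≠ [] ∧ ValidRS c as.tail bs
  | true :: c, as, bs => bs ≠ [] ∧
      (∀ x ∈ as, ¬(x + 1 = bs.headI ∨ x = bs.headI ∨ x = bs.headI + 1)) ∧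
      ValidRS c as bs.tail

/-! At the first position where two valid colourings differ, one places the next red letter
`a` and the other the next blue letter `b`, so equality of the merged words forces `a = b`.
But placing `b` before the remaining red letters requires that `b` not occur among them. -/

theorem List.headI_mem {α : Type*} [Inhabited α] {l : List α} (h : l ≠ []) : l.headI ∈ l := by
  obtain ⟨a, t, rfl⟩ := List.exists_cons_of_ne_nil h
  exact List.mem_cons_self

theorem ValidRS.headI_ne {c₁ c₂ : List Bool} {as bs : List ℕ}
    (h₁ : ValidRS (false :: c₁) as bs) (h₂ : ValidRS (true :: c₂) as bs) :
    as.headI ≠ bs.headI := fun heq =>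
  h₂.2.1 as.headI (List.headI_mem h₁.1) (Or.inr (Or.inl heq))

theorem ValidRS.eq_of_merge_eq : ∀ {c₁ c₂ : List Bool} {as bs : List ℕ},
    ValidRS c₁ as bs → ValidRS c₂ as bs → merge c₁ as bs = merge c₂ as bs → c₁ = c₂
  | [], [], _, _, _, _, _ => rfl
  | [], b :: _, _, _, ⟨rfl, rfl⟩, h₂, _ => by cases b <;> exact (h₂.1 rfl).elim
  | b :: _, [], _, _, h₁, ⟨rfl, rfl⟩, _ => by cases b <;> exact (h₁.1 rfl).elim
  | false :: _, false :: _, _, _, h₁, h₂, hm => by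
    rw [eq_of_merge_eq h₁.2 h₂.2 (List.cons.inj hm).2]
  | true :: _, true :: _, _, _, h₁, h₂, hm => by
    rw [eq_of_merge_eq h₁.2.2 h₂.2.2 (List.cons.inj hm).2]
  | false :: _, true :: _, _, _, h₁, h₂, hm => absurd (List.cons.inj hm).1 (h₁.headI_ne h₂)
  | true :: _, false :: _, _, _, h₁, h₂, hm => absurd (List.cons.inj hm).1.symm (h₂.headI_ne h₁)

theorem restricted_shuffle_injective_general (α β : List ℕ) :
    ∀ c₁ c₂ : List Bool, ValidRS c₁ α β → ValidRS c₂ α β →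
      merge c₁ α β = merge c₂ α β → c₁ = c₂ :=
  fun _ _ => ValidRS.eq_of_merge_eq

/-- distinct restricted shuffles of α with β give distinct words. -/
theorem restricted_shuffle_injective (ω : Equiv.Perm ℕ) (α β : List ℕ)
    (h : IsReducedWordOf (α ++ β) ω) :
    ∀ c₁ c₂ : List Bool, ValidRS c₁ α β → ValidRS c₂ α β →
      merge c₁ α β = merge c₂ α β → c₁ = c₂ :=
  restricted_shuffle_injective_general α β
end
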